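/- (Symmetry of the M1 one-step map.) Let B, E : ℂ³ → ℂ³ be arbitrary functions and for x ∈ ℂ³ let F(x) = [[B̃(x), −iE(x)],[iE(x)ᵀ, 0]] ∈ ℂ^{4×4}. For h ∈ ℝ define Φ_h : ℂ⁴ × ℂ⁴ → ℂ⁴ × ℂ⁴ by Φ_h(y, u) = (y⁺, u⁺), where y⁺ = y + h·exp((h/2)F(x))·u, u⁺ = exp((h/2)F(x⁺))·exp((h/2)F(x))·u, and x, x⁺ denote the first three components of y, y⁺ respectively. Then Φ_{−h}(Φ_h(y, u)) = (y, u) for all (y, u), i.e. the method is symmetric: Φ_h⁻¹ = Φ_{−h}. -/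

import Mathlib

/-!
The reverse step `Φ_{-h}` started at `(y⁺, u⁺)` first applies `exp(-(h/2)F(x⁺))`, which cancels the
last factor of `u⁺` and recovers the intermediate velocity `v = exp((h/2)F(x))u`; hence its
position update is `y⁺ - h v = y`, and its last half-step `exp(-(h/2)F(x))` returns `v` to `u`.
-/

open Matrix

/-- The 4×4 complex field matrix `F(x) = [[B̃(x), −iE(x)],[iE(x)ᵀ, 0]]`,
where `B̃(x)α = α × B(x)`, for complex field functions `B, E`. -/
noncomputable def FmatC (B E : (Fin 3 → ℂ) → (Fin 3 → ℂ)) (x : Fin 3 → ℂ) :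
    Matrix (Fin 4) (Fin 4) ℂ :=
  !![0, B x 2, -B x 1, -Complex.I * E x 0;
     -B x 2, 0, B x 0, -Complex.I * E x 1;
     B x 1, -B x 0, 0, -Complex.I * E x 2;
     Complex.I * E x 0, Complex.I * E x 1, Complex.I * E x 2, 0]

/-- The spatial part (first three components) of a 4-vector. -/
def spatial (y : Fin 4 → ℂ) : Fin 3 → ℂ := fun i => y i.castSucc

/-- The one-step map `Φ_h` of the splitting method M1:
`y⁺ = y + h·exp((h/2)F(x))u`, `u⁺ = exp((h/2)F(x⁺))·exp((h/2)F(x))·u`. -/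
noncomputable def PhiM1 (B E : (Fin 3 → ℂ) → (Fin 3 → ℂ)) (h : ℝ)
    (p : (Fin 4 → ℂ) × (Fin 4 → ℂ)) : (Fin 4 → ℂ) × (Fin 4 → ℂ) :=
  let y := p.1
  let u := p.2
  let yplus := y + (h : ℂ) •
    (NormedSpace.exp (((h : ℂ) / 2) • FmatC B E (spatial y)) *ᵥ u)
  (yplus,
    NormedSpace.exp (((h : ℂ) / 2) • FmatC B E (spatial yplus)) *ᵥ
      (NormedSpace.exp (((h : ℂ) / 2) • FmatC B E (spatial y)) *ᵥ u))

theorem Matrix.exp_neg_mulVec_exp_mulVec {m 𝔸 : Type*} [Fintype m] [DecidableEq m]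
    [NormedRing 𝔸] [NormedAlgebra ℚ 𝔸] [CompleteSpace 𝔸] (M : Matrix m m 𝔸) (v : m → 𝔸) :
    NormedSpace.exp (-M) *ᵥ (NormedSpace.exp M *ᵥ v) = v := by
  rw [mulVec_mulVec, ← exp_add_of_commute _ _ (Commute.refl M).neg_left, neg_add_cancel,
    NormedSpace.exp_zero, one_mulVec]

theorem Matrix.exp_neg_half_smul_mulVec_exp_half_smul_mulVec {m : Type*} [Fintype m]
    [DecidableEq m] (h : ℝ) (M : Matrix m m ℂ) (v : m → ℂ) :
    NormedSpace.exp ((((-h : ℝ) : ℂ) / 2) • M) *ᵥ (NormedSpace.exp (((h : ℂ) / 2) • M) *ᵥ v)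
      = v := by
  rw [Complex.ofReal_neg, neg_div, neg_smul, exp_neg_mulVec_exp_mulVec]

/-- Symmetry of the M1 one-step map: `Φ_{−h} ∘ Φ_h = id`. -/
theorem PhiM1_symmetric (B E : (Fin 3 → ℂ) → (Fin 3 → ℂ)) (h : ℝ)
    (y u : Fin 4 → ℂ) :
    PhiM1 B E (-h) (PhiM1 B E h (y, u)) = (y, u) := by
  simp only [PhiM1, exp_neg_half_smul_mulVec_exp_half_smul_mulVec]
  set v := NormedSpace.exp (((h : ℂ) / 2) • FmatC B E (spatial y)) *ᵥ u
  have hy : y + (h : ℂ) • v + ((-h : ℝ) : ℂ) • v = y := by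
    rw [Complex.ofReal_neg, neg_smul, add_neg_cancel_right]
  rw [hy, exp_neg_half_smul_mulVec_exp_half_smul_mulVec]
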